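/- arXiv:1602.01860 — 2 statements merged into one kernel-verified Lean document; each statement's English description precedes it below -/
import Mathlib

section
/- Suppose the ESP data satisfies Assumption (B) and fix δ > 0 and a set B as in Assumption (B). Then for each x ∈ ∂G ∖ W* there exists a unique map L_x : ℝ^J → ℝ^J such that for every y ∈ ℝ^J, L_x y ∈ H_x and L_x y − y ∈ span(d(x)); moreover L_x is linear and satisfies ‖L_x y‖_B ≤ ‖y‖_B for all y ∈ ℝ^J, i.e., L_x is a contraction with respect to the gauge of B and maps B into B ∩ H_x. -/
open scoped RealInnerProductSpace ENNReal NNReal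
open Filter Topology Set MeasureTheory

noncomputable section

abbrev EucSp (J : ℕ) : Type := EuclideanSpace ℝ (Fin J)

/-- The convex cone generated by a set of vectors (by convention `coneGen ∅ = {0}`). -/
def coneGen {J : ℕ} (s : Set (EucSp J)) : Set (EucSp J) :=
  { y | ∃ (k : ℕ) (r : Fin k → ℝ) (v : Fin k → EucSp J),
      (∀ i, 0 ≤ r i) ∧ (∀ i, v i ∈ s) ∧ y = ∑ i, r i • v i }

/-- The polyhedral domain `G`. -/
def Gset {J N : ℕ} (n : Fin N → EucSp J) (c : Fin N → ℝ) : Set (EucSp J) :=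
  { x | ∀ i, c i ≤ ⟪x, n i⟫ }

/-- The active index set `I(x)`. -/
def ISet {J N : ℕ} (n : Fin N → EucSp J) (c : Fin N → ℝ) (x : EucSp J) : Set (Fin N) :=
  { i | ⟪x, n i⟫ = c i }

/-- The cone `d(x)` of admissible reflection directions at `x`. -/
def dCone {J N : ℕ} (n : Fin N → EucSp J) (c : Fin N → ℝ) (d : Fin N → EucSp J)
    (x : EucSp J) : Set (EucSp J) :=
  coneGen (d '' ISet n c x)

/-- `(Z, Y)` solves the extended Skorokhod problem for `X`. -/
def SolvesESP {J N : ℕ} (n : Fin N → EucSp J) (c : Fin N → ℝ) (d : Fin N → EucSp J)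
    (X Z Y : ℝ → EucSp J) : Prop :=
  ContinuousOn Z (Ici 0) ∧ ContinuousOn Y (Ici 0) ∧
  Y 0 ∈ dCone n c d (Z 0) ∧
  (∀ t ∈ Ici (0:ℝ), Z t = X t + Y t) ∧
  (∀ t ∈ Ici (0:ℝ), Z t ∈ Gset n c) ∧
  (∀ s t : ℝ, 0 ≤ s → s < t →
    Y t - Y s ∈ coneGen (⋃ u ∈ Ioc s t, dCone n c d (Z u)))

/-- Assumption (B). -/
def AssumptionB {J N : ℕ} (n d : Fin N → EucSp J) : Prop :=
  ∃ δ : ℝ, 0 < δ ∧ ∃ B : Set (EucSp J),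
    IsCompact B ∧ Convex ℝ B ∧ (∀ z ∈ B, -z ∈ B) ∧ (0 : EucSp J) ∈ interior B ∧
    ∀ i : Fin N, ∀ z ∈ frontier B, |⟪z, n i⟫| < δ →
      ∀ ν : EucSp J, ‖ν‖ = 1 → (∀ y ∈ B, 0 ≤ ⟪ν, y - z⟫) → ⟪ν, d i⟫ = 0

/-- Assumption (π). -/
def AssumptionPi {J N : ℕ} (n : Fin N → EucSp J) (c : Fin N → ℝ) (d : Fin N → EucSp J)
    (proj : EucSp J → EucSp J) : Prop :=
  (∀ x, proj x ∈ Gset n c) ∧ (∀ x ∈ Gset n c, proj x = x) ∧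
  (∀ x, x ∉ Gset n c → proj x - x ∈ dCone n c d (proj x))

/-- The supremum norm `‖f‖_T` of `f` over `[0, T]`. -/
def supNorm {J : ℕ} (f : ℝ → EucSp J) (T : ℝ) : ℝ :=
  ⨆ s : Icc (0:ℝ) T, ‖f s.1‖

/-- The subspace (as a set) `H_x`. -/
def Hset {J N : ℕ} (n : Fin N → EucSp J) (c : Fin N → ℝ) (x : EucSp J) : Set (EucSp J) :=
  { y | ∀ i ∈ ISet n c x, ⟪y, n i⟫ = 0 }

/-- The smooth part `S` of the boundary. -/
def Sstar {J N : ℕ} (n : Fin N → EucSp J) (c : Fin N → ℝ) : Set (EucSp J) :=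
  { x ∈ frontier (Gset n c) | (ISet n c x).ncard = 1 }

/-- The nonsmooth part `N` of the boundary. -/
def Nstar {J N : ℕ} (n : Fin N → EucSp J) (c : Fin N → ℝ) : Set (EucSp J) :=
  { x ∈ frontier (Gset n c) | 2 ≤ (ISet n c x).ncard }

/-- The set `W`. -/
def Wstar {J N : ℕ} (n : Fin N → EucSp J) (c : Fin N → ℝ) (d : Fin N → EucSp J) :
    Set (EucSp J) :=
  { x ∈ Nstar n c | Submodule.span ℝ (Hset n c x ∪ dCone n c d x) ≠ ⊤ }

/-- The boundary jitter property on `[0, T)`. -/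
def Jitter {J N : ℕ} (n : Fin N → EucSp J) (c : Fin N → ℝ) (Z Y : ℝ → EucSp J)
    (T : ℝ≥0∞) : Prop :=
  (∀ t : ℝ, 0 ≤ t → ENNReal.ofReal t < T → Z t ∈ Sstar n c →
    ∀ s u : ℝ, s < t → t < u → ENNReal.ofReal u < T →
      ∃ a ∈ Ioo (max s 0) u, ∃ b ∈ Ioo (max s 0) u, Y a ≠ Y b) ∧
  (volume {t : ℝ | 0 ≤ t ∧ ENNReal.ofReal t < T ∧ Z t ∈ Nstar n c} = 0) ∧
  (Z 0 ∈ Nstar n c →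
    ∀ i ∈ ISet n c (Z 0), ∀ δ : ℝ, 0 < δ → ENNReal.ofReal δ < T →
      ∃ u ∈ Ioo (0:ℝ) δ, ISet n c (Z u) = {i}) ∧
  (∀ t : ℝ, 0 < t → ENNReal.ofReal t < T → Z t ∈ Nstar n c →
    ∀ i ∈ ISet n c (Z t), ∀ δ : ℝ, 0 < δ → δ < t →
      ∃ s ∈ Ioo (t - δ) t, ISet n c (Z s) = {i})

/-- `f` is right-continuous with finite left limits on `[0, T)`. -/
def DrOn {J : ℕ} (f : ℝ → EucSp J) (T : ℝ≥0∞) : Prop :=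
  (∀ t : ℝ, 0 ≤ t → ENNReal.ofReal t < T → Tendsto f (𝓝[>] t) (𝓝 (f t))) ∧
  (∀ t : ℝ, 0 < t → ENNReal.ofReal t < T → ∃ L, Tendsto f (𝓝[<] t) (𝓝 L))

/-- `f ∈ D_{ℓ,r}([0,T))`. -/
def DlrOn {J : ℕ} (f : ℝ → EucSp J) (T : ℝ≥0∞) : Prop :=
  (∀ t : ℝ, 0 < t → ENNReal.ofReal t < T → ∃ L, Tendsto f (𝓝[<] t) (𝓝 L)) ∧
  (∀ t : ℝ, 0 ≤ t → ENNReal.ofReal t < T → ∃ L, Tendsto f (𝓝[>] t) (𝓝 L)) ∧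
  (∀ t : ℝ, 0 < t → ENNReal.ofReal t < T →
    Tendsto f (𝓝[<] t) (𝓝 (f t)) ∨ Tendsto f (𝓝[>] t) (𝓝 (f t)))

/-- `(φ, η)` solves the derivative problem associated with `Z` for `ψ` on `[0, T)`. -/
def SolvesDPOn {J N : ℕ} (n : Fin N → EucSp J) (c : Fin N → ℝ) (d : Fin N → EucSp J)
    (Z ψ φ η : ℝ → EucSp J) (T : ℝ≥0∞) : Prop :=
  DrOn φ T ∧ DrOn η T ∧
  η 0 ∈ Submodule.span ℝ (dCone n c d (Z 0)) ∧
  (∀ t : ℝ, 0 ≤ t → ENNReal.ofReal t < T →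
    φ t = ψ t + η t ∧ φ t ∈ Hset n c (Z t)) ∧
  (∀ s t : ℝ, 0 ≤ s → s < t → ENNReal.ofReal t < T →
    η t - η s ∈ Submodule.span ℝ (⋃ u ∈ Ioc s t, dCone n c d (Z u)))

/-- Decomposition `Y = R L` where the components of `L` are nondecreasing and can
increase only when `Z` is on the corresponding face. -/
def LocalTimeProps {J N : ℕ} (n : Fin N → EucSp J) (c : Fin N → ℝ) (d : Fin N → EucSp J)
    (Z Y : ℝ → EucSp J) (L : ℝ → EucSp N) : Prop :=
  ContinuousOn L (Ici 0) ∧ L 0 = 0 ∧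
  (∀ t ∈ Ici (0:ℝ), ∀ i, 0 ≤ L t i) ∧
  (∀ i, MonotoneOn (fun t => L t i) (Ici 0)) ∧
  (∀ t ∈ Ici (0:ℝ), Y t = ∑ i, L t i • d i) ∧
  (∀ i : Fin N, ∀ s t : ℝ, 0 ≤ s → s ≤ t →
    (∀ u ∈ Icc s t, Z u ∉ {x ∈ frontier (Gset n c) | ⟪x, n i⟫ = c i}) →
    L s i = L t i)

/-- The dual set `B*`. -/
def dualSet {J : ℕ} (B : Set (EucSp J)) : Set (EucSp J) :=
  { y | ∀ z ∈ B, ⟪y, z⟫ ≤ 1 }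

/-- `frontComp Ls k y = Ls 0 (Ls 1 (⋯ (Ls (k-1) y)))`. -/
def frontComp {J : ℕ} (Ls : ℕ → (EucSp J → EucSp J)) : ℕ → EucSp J → EucSp J
  | 0, y => y
  | (k+1), y => frontComp Ls k (Ls k y)

/-- `backComp Ls k y = Ls (k-1) (⋯ (Ls 0 y))`. -/
def backComp {J : ℕ} (Ls : ℕ → (EucSp J → EucSp J)) : ℕ → EucSp J → EucSp J
  | 0, y => y
  | (k+1), y => Ls k (backComp Ls k y)

/-!
`H_x` and `span d(x)` are complementary subspaces, and `L_x` is the linear projection onto `H_x`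
along `span d(x)`. They span `ℝ^J`: directly when at most one constraint is active, and by
`x ∉ W*` otherwise. Assumption (B) says that at a boundary point of `B` lying in `H_x` every
inward normal of `B` is orthogonal to `span d(x)`; this makes the projection a contraction for
the gauge of `B`, and in particular forces `H_x ∩ span d(x) = 0`.
-/

section ConvexBody

variable {E : Type*} [NormedAddCommGroup E] [InnerProductSpace ℝ E] {B : Set E}

lemma Convex.exists_unit_inward_normal [CompleteSpace E] (hB : Convex ℝ B)
    (hBint : (interior B).Nonempty) {w : E} (hw : w ∉ interior B) :
    ∃ ν : E, ‖ν‖ = 1 ∧ (∀ b ∈ B, 0 ≤ ⟪ν, b - w⟫) ∧ ∀ a ∈ interior B, 0 < ⟪ν, a - w⟫ := by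
  obtain ⟨f, hf⟩ := geometric_hahn_banach_open_point hB.interior isOpen_interior hw
  have hfB : ∀ b ∈ B, f b ≤ f w := by
    refine fun b hb ↦ closure_minimal (fun a ha ↦ (hf a ha).le)
      (isClosed_Iic.preimage f.continuous) ?_
    rw [hB.closure_interior_eq_closure_of_nonempty_interior hBint]
    exact subset_closure hb
  set z := (InnerProductSpace.toDual ℝ E).symm f
  have hz : ∀ y, ⟪z, y⟫ = f y := fun y ↦ InnerProductSpace.toDual_symm_apply
  have hz0 : 0 < ‖z‖ := by
    obtain ⟨a, ha⟩ := hBint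
    refine norm_pos_iff.2 fun h ↦ ?_
    simpa [← hz, h] using hf a ha
  have hν : ∀ y, ⟪-(‖z‖⁻¹ • z), y - w⟫ = ‖z‖⁻¹ * (f w - f y) := fun y ↦ by
    rw [inner_neg_left, real_inner_smul_left, inner_sub_right, hz, hz]; ring
  refine ⟨-(‖z‖⁻¹ • z), ?_, fun b hb ↦ ?_, fun a ha ↦ ?_⟩
  · rw [norm_neg, norm_smul, norm_inv, norm_norm, inv_mul_cancel₀ hz0.ne']
  · rw [hν]; exact mul_nonneg (inv_nonneg.2 hz0.le) (sub_nonneg.2 (hfB b hb))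
  · rw [hν]; exact mul_pos (inv_pos.2 hz0) (sub_pos.2 (hf a ha))

variable [CompleteSpace E] {H V : Submodule ℝ E}

/-- If `gauge q < gauge p = g`, a unit inward normal `ν` at `p / g` separates `q / g ∈ interior B`
strictly from `p / g`, contradicting `⟪ν, p - q⟫ = 0`. -/
lemma gauge_le_gauge_of_inward_normal_orthogonal (hB : Convex ℝ B) (hB0 : B ∈ 𝓝 0)
    (hnormal : ∀ w ∈ frontier B, w ∈ H → ∀ ν : E, ‖ν‖ = 1 → (∀ b ∈ B, 0 ≤ ⟪ν, b - w⟫) →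
      ∀ v ∈ V, ⟪ν, v⟫ = 0)
    {p q : E} (hp : p ∈ H) (hpq : p - q ∈ V) : gauge B p ≤ gauge B q := by
  by_contra! hlt
  set g := gauge B p
  have hg : 0 < g := (gauge_nonneg q).trans_lt hlt
  have hw : g⁻¹ • p ∈ frontier B := by
    rw [← gauge_eq_one_iff_mem_frontier hB hB0, gauge_smul_of_nonneg (inv_nonneg.2 hg.le),
      smul_eq_mul, inv_mul_cancel₀ hg.ne']
  have hq : g⁻¹ • q ∈ interior B := by
    rw [← gauge_lt_one_iff_mem_interior hB hB0, gauge_smul_of_nonneg (inv_nonneg.2 hg.le),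
      smul_eq_mul, ← div_eq_inv_mul]
    exact (div_lt_one hg).2 hlt
  obtain ⟨ν, hν1, hνB, hνint⟩ := hB.exists_unit_inward_normal ⟨_, hq⟩ hw.2
  have hνpq : ⟪ν, p - q⟫ = 0 := hnormal _ hw (H.smul_mem _ hp) ν hν1 hνB _ hpq
  have hsep := hνint _ hq
  rw [← smul_sub, real_inner_smul_right, ← neg_sub, inner_neg_right, hνpq] at hsep
  simp at hsep

lemma disjoint_of_inward_normal_orthogonal (hB : Convex ℝ B) (hB0 : B ∈ 𝓝 0)
    (hBbdd : Bornology.IsBounded B)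
    (hnormal : ∀ w ∈ frontier B, w ∈ H → ∀ ν : E, ‖ν‖ = 1 → (∀ b ∈ B, 0 ≤ ⟪ν, b - w⟫) →
      ∀ v ∈ V, ⟪ν, v⟫ = 0) :
    Disjoint H V := by
  refine Submodule.disjoint_def.2 fun v hvH hvV ↦ ?_
  have hle := gauge_le_gauge_of_inward_normal_orthogonal hB hB0 hnormal hvH
    (q := 0) (by simpa using hvV)
  rw [gauge_zero] at hle
  exact (gauge_eq_zero (absorbent_nhds_zero hB0)
    (NormedSpace.isVonNBounded_of_isBounded ℝ hBbdd)).1 (hle.antisymm (gauge_nonneg v))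

end ConvexBody

lemma Submodule.orthogonal_span_singleton_sup_span_singleton {E : Type*}
    [NormedAddCommGroup E] [InnerProductSpace ℝ E] {v e : E} (h : ⟪e, v⟫ = 1) :
    (ℝ ∙ v)ᗮ ⊔ (ℝ ∙ e) = ⊤ := by
  refine eq_top_iff.2 fun y _ ↦ Submodule.mem_sup.2
    ⟨y - ⟪y, v⟫ • e, ?_, ⟪y, v⟫ • e, Submodule.smul_mem _ _ (Submodule.mem_span_singleton_self e),
      sub_add_cancel y _⟩
  rw [Submodule.mem_orthogonal_singleton_iff_inner_left, inner_sub_left, real_inner_smul_left, h,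
    mul_one, sub_self]

section Projection

variable {R E : Type*} [Ring R] [AddCommGroup E] [Module R E] {p q : Submodule R E}

lemma Submodule.eq_projection_of_forall_mem_sub_mem (hpq : IsCompl p q) {f : E → E}
    (hf : ∀ y, f y ∈ p ∧ f y - y ∈ q) :
    f = p.projection q hpq := by
  funext y
  refine sub_eq_zero.1 (Submodule.disjoint_def.1 hpq.1 _
    (p.sub_mem (hf y).1 (p.projection_apply_mem hpq y)) ?_)
  rw [← sub_add_sub_cancel (f y) y]
  exact q.add_mem (hf y).2 (p.sub_projection_mem hpq y)

lemma Submodule.projection_mem_and_projection_sub_mem (hpq : IsCompl p q) (y : E) :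
    p.projection q hpq y ∈ p ∧ p.projection q hpq y - y ∈ q := by
  refine ⟨p.projection_apply_mem hpq y, ?_⟩
  rw [← neg_sub]
  exact q.neg_mem (p.sub_projection_mem hpq y)

end Projection

section Cone

variable {J : ℕ}

lemma subset_coneGen (s : Set (EucSp J)) : s ⊆ coneGen s :=
  fun v hv ↦ ⟨1, fun _ ↦ 1, fun _ ↦ v, fun _ ↦ zero_le_one, fun _ ↦ hv, by simp⟩

lemma coneGen_subset_span (s : Set (EucSp J)) : coneGen s ⊆ Submodule.span ℝ s := by
  rintro _ ⟨k, r, v, -, hv, rfl⟩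
  exact Submodule.sum_mem _ fun i _ ↦ Submodule.smul_mem _ _ (Submodule.subset_span (hv i))

lemma span_coneGen (s : Set (EucSp J)) : Submodule.span ℝ (coneGen s) = Submodule.span ℝ s :=
  le_antisymm (Submodule.span_le.2 (coneGen_subset_span s))
    (Submodule.span_mono (subset_coneGen s))

end Cone

section Polyhedron

variable {J N : ℕ} (n d : Fin N → EucSp J) (c : Fin N → ℝ) (x : EucSp J)

def Hsub : Submodule ℝ (EucSp J) := ⨅ i ∈ ISet n c x, (ℝ ∙ n i)ᗮ

lemma coe_Hsub : (Hsub n c x : Set (EucSp J)) = Hset n c x := by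
  ext y
  simp [Hsub, Hset, Submodule.mem_orthogonal_singleton_iff_inner_left]

lemma span_dCone : Submodule.span ℝ (dCone n c d x) = Submodule.span ℝ (d '' ISet n c x) :=
  span_coneGen _

variable {n d c x}

lemma Hsub_sup_span_dCone_of_ncard_le_one (hdn : ∀ i, ⟪d i, n i⟫ = 1)
    (hI : (ISet n c x).ncard ≤ 1) : Hsub n c x ⊔ Submodule.span ℝ (dCone n c d x) = ⊤ := by
  rw [span_dCone]
  rcases (Set.ncard_le_one_iff_eq (Set.toFinite _)).1 hI with hI | ⟨i, hI⟩
  · simp [Hsub, hI]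
  · rw [hI, Set.image_singleton, Hsub, hI, iInf_singleton]
    exact Submodule.orthogonal_span_singleton_sup_span_singleton (hdn i)

lemma Hsub_sup_span_dCone (hdn : ∀ i, ⟪d i, n i⟫ = 1) (hx : x ∈ frontier (Gset n c))
    (hW : x ∉ Wstar n c d) : Hsub n c x ⊔ Submodule.span ℝ (dCone n c d x) = ⊤ := by
  by_cases hI : (ISet n c x).ncard ≤ 1
  · exact Hsub_sup_span_dCone_of_ncard_le_one hdn hI
  · have hspan : Submodule.span ℝ (Hset n c x ∪ dCone n c d x) = ⊤ :=
      not_not.1 fun hne ↦ hW ⟨⟨hx, by omega⟩, hne⟩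
    rwa [Submodule.span_union, ← coe_Hsub, Submodule.span_eq] at hspan

/-- At a point `w ∈ H_x` we have `|⟪w, n i⟫| = 0 < δ` for every active `i`, so Assumption (B)
applies to every `d i` spanning `d(x)`. -/
lemma inward_normal_orthogonal_span_dCone {δ : ℝ} (hδ : 0 < δ) {B : Set (EucSp J)}
    (hB : ∀ i : Fin N, ∀ z ∈ frontier B, |⟪z, n i⟫| < δ →
      ∀ ν : EucSp J, ‖ν‖ = 1 → (∀ y ∈ B, 0 ≤ ⟪ν, y - z⟫) → ⟪ν, d i⟫ = 0) :
    ∀ w ∈ frontier B, w ∈ Hsub n c x → ∀ ν : EucSp J, ‖ν‖ = 1 → (∀ b ∈ B, 0 ≤ ⟪ν, b - w⟫) →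
      ∀ v ∈ Submodule.span ℝ (dCone n c d x), ⟪ν, v⟫ = 0 := by
  intro w hw hwH ν hν hνB
  rw [← SetLike.mem_coe, coe_Hsub] at hwH
  have hνd : ∀ i ∈ ISet n c x, ⟪ν, d i⟫ = 0 := fun i hi ↦
    hB i w hw (by rw [hwH i hi, abs_zero]; exact hδ) ν hν hνB
  have hle : Submodule.span ℝ (d '' ISet n c x) ≤ (ℝ ∙ ν)ᗮ := by
    rw [Submodule.span_le]
    rintro _ ⟨i, hi, rfl⟩
    exact Submodule.mem_orthogonal_singleton_iff_inner_right.2 (hνd i hi)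
  intro v hv
  rw [span_dCone] at hv
  exact Submodule.mem_orthogonal_singleton_iff_inner_right.1 (hle hv)

end Polyhedron

theorem statement13_general (J N : ℕ)
    (n d : Fin N → EucSp J) (c : Fin N → ℝ)
    (hdn : ∀ i, ⟪d i, n i⟫ = 1)
    (δ : ℝ) (hδ : 0 < δ) (B : Set (EucSp J))
    (hBcompact : IsCompact B) (hBconvex : Convex ℝ B)
    (hB0 : (0 : EucSp J) ∈ interior B)
    (hBgeom : ∀ i : Fin N, ∀ z ∈ frontier B, |⟪z, n i⟫| < δ →
      ∀ ν : EucSp J, ‖ν‖ = 1 → (∀ y ∈ B, 0 ≤ ⟪ν, y - z⟫) → ⟪ν, d i⟫ = 0) :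
    ∀ x ∈ frontier (Gset n c), x ∉ Wstar n c d →
      (∃! L : EucSp J → EucSp J,
        ∀ y : EucSp J, L y ∈ Hset n c x ∧ L y - y ∈ Submodule.span ℝ (dCone n c d x)) ∧
      (∀ L : EucSp J → EucSp J,
        (∀ y : EucSp J, L y ∈ Hset n c x ∧ L y - y ∈ Submodule.span ℝ (dCone n c d x)) →
        IsLinearMap ℝ L ∧
        (∀ y : EucSp J, gauge B (L y) ≤ gauge B y) ∧
        (∀ y ∈ B, L y ∈ B ∩ Hset n c x)) := by
  intro x hx hW
  have hB0' : B ∈ 𝓝 0 := mem_interior_iff_mem_nhds.1 hB0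
  have hnormal := inward_normal_orthogonal_span_dCone (c := c) (x := x) hδ hBgeom
  have hcompl : IsCompl (Hsub n c x) (Submodule.span ℝ (dCone n c d x)) :=
    ⟨disjoint_of_inward_normal_orthogonal hBconvex hB0' hBcompact.isBounded hnormal,
      codisjoint_iff.2 (Hsub_sup_span_dCone hdn hx hW)⟩
  simp only [← coe_Hsub, SetLike.mem_coe]
  refine ⟨⟨_, Submodule.projection_mem_and_projection_sub_mem hcompl,
    fun L hL ↦ Submodule.eq_projection_of_forall_mem_sub_mem hcompl hL⟩, fun L hL ↦ ?_⟩
  have hgauge : ∀ y, gauge B (L y) ≤ gauge B y := fun y ↦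
    gauge_le_gauge_of_inward_normal_orthogonal hBconvex hB0' hnormal (hL y).1 (hL y).2
  refine ⟨Submodule.eq_projection_of_forall_mem_sub_mem hcompl hL ▸ LinearMap.isLinear _, hgauge,
    fun y hy ↦ ⟨?_, (hL y).1⟩⟩
  rw [← hBcompact.isClosed.closure_eq, ← gauge_le_one_iff_mem_closure hBconvex hB0']
  exact (hgauge y).trans (gauge_le_one_of_mem hy)

/-- **Lemma (derivative projection operators).**
Fix `δ > 0` and a set `B` as in Assumption (B).  For each `x ∈ ∂G \ W*` there is a unique map
`L_x` with `L_x y ∈ H_x` and `L_x y − y ∈ span(d(x))` for every `y`; any such map is linear,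
is a contraction for the gauge of `B`, and maps `B` into `B ∩ H_x`. -/
theorem statement13 (J N : ℕ) (hJ : 1 ≤ J) (hN : 1 ≤ N)
    (n d : Fin N → EucSp J) (c : Fin N → ℝ)
    (hn : ∀ i, ‖n i‖ = 1) (hdn : ∀ i, ⟪d i, n i⟫ = 1)
    (hGne : (Gset n c).Nonempty)
    (δ : ℝ) (hδ : 0 < δ) (B : Set (EucSp J))
    (hBcompact : IsCompact B) (hBconvex : Convex ℝ B) (hBsymm : ∀ z ∈ B, -z ∈ B)
    (hB0 : (0 : EucSp J) ∈ interior B)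
    (hBgeom : ∀ i : Fin N, ∀ z ∈ frontier B, |⟪z, n i⟫| < δ →
      ∀ ν : EucSp J, ‖ν‖ = 1 → (∀ y ∈ B, 0 ≤ ⟪ν, y - z⟫) → ⟪ν, d i⟫ = 0) :
    ∀ x ∈ frontier (Gset n c), x ∉ Wstar n c d →
      (∃! L : EucSp J → EucSp J,
        ∀ y : EucSp J, L y ∈ Hset n c x ∧ L y - y ∈ Submodule.span ℝ (dCone n c d x)) ∧
      (∀ L : EucSp J → EucSp J,
        (∀ y : EucSp J, L y ∈ Hset n c x ∧ L y - y ∈ Submodule.span ℝ (dCone n c d x)) →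
        IsLinearMap ℝ L ∧
        (∀ y : EucSp J, gauge B (L y) ≤ gauge B y) ∧
        (∀ y ∈ B, L y ∈ B ∩ Hset n c x)) :=
  statement13_general J N n d c hdn δ hδ B hBcompact hBconvex hB0 hBgeom
end
end

section
/- Let X : [0,∞) → ℝ be continuous with X(0) ≥ 0, and set Z(t) = Γ₁(X)(t) and Y(t) = max(sup_{s∈[0,t]}(−X(s)), 0). Then for every continuous ψ : [0,∞) → ℝ: (1) ∇_ψΓ₁(X)(t) exists for every t ≥ 0 and the resulting function lies in D_{ℓ,r}; (2) ∇_ψΓ₁(X)(0) = ψ(0) if X(0) > 0 and ∇_ψΓ₁(X)(0) = max(ψ(0),0) if X(0) = 0; and if ∇_ψΓ₁(X) is discontinuous at some t > 0, then Z(t) = 0 and ∇_ψΓ₁(X) is left continuous at t if and only if ∇_ψΓ₁(X)(t−) ≥ 0; (3) if in addition for every t ≥ 0 with Z(t) = 0 and all s < t < u, Y is nonconstant on (max(s,0), u), then there exists a unique solution (φ,η) of the one-dimensional DP associated with Z for ψ, and φ(t) = ∇_ψΓ₁(X)(t+) for all t ≥ 0. -/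
/-!
Write `M(t) = sup_{[0,t]} (-X)`, so that `Γ₁(X)(t) = X(t) + max(M(t), 0)`, and let `S(t)` be the
set of maximisers of `-X` on `[0,t]`. By Danskin's theorem the right derivative in `ε` of
`sup_{[0,t]} (-X - εψ)` is `sup_{S(t)} (-ψ)`, and the chain rule for `max(·, 0)` turns this into
an explicit formula for `g = ∇_ψΓ₁(X)`. Away from the zeros of `Z`, `M` and `S` are locally
constant, so `g - ψ` is locally constant there. At a zero `t` of `Z` the one-sided limits of
`g` are computed by locating `S(u)` for `u` near `t`; one finds `g(t) = max(g(t-), 0)` and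
`g(t+) ∈ {g(t), 0}`, which gives (1) and (2). Under the jitter condition `M` increases right
after every zero `b` of `Z`, which confines `S(u)` to `[b, u]` for `u > b` and forces
`g(b+) = 0`; hence `φ = g(· +)` vanishes on the zeros of `Z` and `η = φ - ψ` is constant between
them. Uniqueness holds for every continuous `Z ≥ 0`: `η(t)` is determined by its value at the last
zero of `Z` before `t`.
-/

open Filter Topology Set

noncomputable section

/-- The one-dimensional Skorokhod map:
`Γ₁(f)(t) = f(t) + max(sup_{s ∈ [0,t]} (−f(s)), 0)`. -/
def SM1 (f : ℝ → ℝ) (t : ℝ) : ℝ :=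
  f t + max (sSup ((fun s => -f s) '' Icc 0 t)) 0

/-- `f` is right-continuous on `[0,∞)` with finite left limits on `(0,∞)`. -/
def Dr1 (f : ℝ → ℝ) : Prop :=
  (∀ t : ℝ, 0 ≤ t → Tendsto f (𝓝[>] t) (𝓝 (f t))) ∧
  (∀ t : ℝ, 0 < t → ∃ L, Tendsto f (𝓝[<] t) (𝓝 L))

/-- `f ∈ D_{ℓ,r}`: finite left limits on `(0,∞)`, finite right limits on `[0,∞)`, and at each
`t > 0`, `f` is left continuous or right continuous. -/
def Dlr1 (f : ℝ → ℝ) : Prop :=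
  (∀ t : ℝ, 0 < t → ∃ L, Tendsto f (𝓝[<] t) (𝓝 L)) ∧
  (∀ t : ℝ, 0 ≤ t → ∃ L, Tendsto f (𝓝[>] t) (𝓝 L)) ∧
  (∀ t : ℝ, 0 < t →
    Tendsto f (𝓝[<] t) (𝓝 (f t)) ∨ Tendsto f (𝓝[>] t) (𝓝 (f t)))

/-- `(φ, η)` solves the one-dimensional derivative problem associated with `Z` for `ψ`. -/
def SolvesDP1 (Z ψ φ η : ℝ → ℝ) : Prop :=
  Dr1 φ ∧ Dr1 η ∧
  (∀ t : ℝ, 0 ≤ t → φ t = ψ t + η t) ∧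
  (∀ t : ℝ, 0 ≤ t → Z t = 0 → φ t = 0) ∧
  (0 < Z 0 → η 0 = 0) ∧
  (∀ s t : ℝ, 0 ≤ s → s < t → (∀ u ∈ Ioc s t, 0 < Z u) → η t = η s)

section Danskin

variable {α : Type*} [TopologicalSpace α] {K : Set α} {f h : α → ℝ}

lemma eventually_add_mul_le_sSup_add_mul (hK : IsCompact K) (hf : Continuous f)
    (hh : Continuous h) {c δ : ℝ} (hc : ∀ s ∈ K, f s = sSup (f '' K) → h s ≤ c) (hδ : 0 < δ) :
    ∀ᶠ ε in 𝓝[>] (0 : ℝ), ∀ s ∈ K, f s + ε * h s ≤ sSup (f '' K) + ε * (c + δ) := by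
  set m := sSup (f '' K)
  have hfm : ∀ s ∈ K, f s ≤ m := fun s hs =>
    le_csSup (hK.bddAbove_image hf.continuousOn) (mem_image_of_mem f hs)
  set C := {s ∈ K | c + δ ≤ h s}
  have off_C : ∀ ε > (0 : ℝ), ∀ s ∈ K, s ∉ C → f s + ε * h s ≤ m + ε * (c + δ) := by
    intro ε hε s hs hsC
    have : h s < c + δ := lt_of_not_ge fun h' => hsC ⟨hs, h'⟩
    nlinarith [hfm s hs]
  rcases C.eq_empty_or_nonempty with hCe | hCne
  · filter_upwards [self_mem_nhdsWithin] with ε hε s hs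
    exact off_C ε hε s hs (hCe ▸ notMem_empty s)
  -- on the compact set `C` the function `f` stays below `m` by a margin, which beats `ε * h`
  obtain ⟨p, hpC, hp⟩ := (hK.inter_right (isClosed_le continuous_const hh)).exists_isMaxOn hCne
    hf.continuousOn
  obtain ⟨B, hB⟩ := hK.bddAbove_image hh.continuousOn
  have hfp : f p < m := (hfm p hpC.1).lt_of_ne fun hpm => by
    linarith [hc p hpC.1 hpm, show c + δ ≤ h p from hpC.2]
  have hsmall : ∀ᶠ ε in 𝓝[>] (0 : ℝ), ε * (B - c - δ) < m - f p := by
    have : Tendsto (fun ε : ℝ => ε * (B - c - δ)) (𝓝[>] 0) (𝓝 (0 * (B - c - δ))) :=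
      (tendsto_nhdsWithin_of_tendsto_nhds tendsto_id).mul_const _
    rw [zero_mul] at this
    exact this.eventually (gt_mem_nhds (by linarith))
  filter_upwards [self_mem_nhdsWithin, hsmall] with ε (hε : 0 < ε) hεs s hs
  by_cases hsC : s ∈ C
  · nlinarith [show f s ≤ f p from hp hsC, hB (mem_image_of_mem h hs)]
  · exact off_C ε hε s hs hsC

/-- Danskin's theorem. -/
theorem tendsto_sSup_image_add_mul_sub_div (hK : IsCompact K) (hKne : K.Nonempty)
    (hf : Continuous f) (hh : Continuous h) :
    Tendsto (fun ε : ℝ => (sSup ((fun s => f s + ε * h s) '' K) - sSup (f '' K)) / ε)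
      (𝓝[>] 0) (𝓝 (sSup (h '' {s ∈ K | f s = sSup (f '' K)}))) := by
  set A := {s ∈ K | f s = sSup (f '' K)}
  have hA : IsCompact A := hK.inter_right (isClosed_eq hf continuous_const)
  obtain ⟨a, haK, hma⟩ := hK.exists_sSup_image_eq hKne hf.continuousOn
  obtain ⟨a', ha'A, hca'⟩ := hA.exists_sSup_image_eq ⟨a, haK, hma.symm⟩ hh.continuousOn
  rw [tendsto_order]
  refine ⟨fun b hb => ?_, fun b hb => ?_⟩
  · filter_upwards [self_mem_nhdsWithin] with ε (hε : 0 < ε)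
    rw [lt_div_iff₀ hε]
    have : f a' + ε * h a' ≤ sSup ((fun s => f s + ε * h s) '' K) :=
      le_csSup (hK.bddAbove_image (hf.add (continuous_const.mul hh)).continuousOn)
        (mem_image_of_mem _ ha'A.1)
    nlinarith [ha'A.2]
  · have hc : ∀ s ∈ K, f s = sSup (f '' K) → h s ≤ sSup (h '' A) := fun s hs hsm =>
      le_csSup (hA.bddAbove_image hh.continuousOn) (mem_image_of_mem h ⟨hs, hsm⟩)
    filter_upwards [self_mem_nhdsWithin,
      eventually_add_mul_le_sSup_add_mul hK hf hh hc (half_pos (sub_pos.2 hb))]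
      with ε (hε : 0 < ε) hup
    rw [div_lt_iff₀ hε]
    have := csSup_le (hKne.image _) (by rintro _ ⟨s, hs, rfl⟩; exact hup s hs)
    nlinarith

end Danskin

section Uniqueness

variable {Z Z' ψ ψ' φ η φ' η' : ℝ → ℝ}

lemma SolvesDP1.congr (h : SolvesDP1 Z ψ φ η) (hZ : EqOn Z Z' (Ici 0)) (hψ : EqOn ψ ψ' (Ici 0)) :
    SolvesDP1 Z' ψ' φ η := by
  obtain ⟨hφ, hη, hadd, hzero, hinit, hconst⟩ := h
  refine ⟨hφ, hη, fun t ht => hψ ht ▸ hadd t ht, fun t ht hZt => hzero t ht (hZ ht ▸ hZt),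
    fun h0 => hinit ((hZ (mem_Ici.2 le_rfl)).symm ▸ h0), fun s t hs hst hpos => ?_⟩
  exact hconst s t hs hst fun u hu => (hZ (mem_Ici.2 (hs.trans hu.1.le))).symm ▸ hpos u hu

/-- `η` is constant between consecutive zeros of `Z` and determined at each zero, so the
value at `t` is read off at the last zero of `Z` before `t` (or at `0` if there is none). -/
theorem SolvesDP1.eqOn (hZc : ContinuousOn Z (Ici 0)) (hZ0 : ∀ t, 0 ≤ t → 0 ≤ Z t)
    (h : SolvesDP1 Z ψ φ η) (h' : SolvesDP1 Z ψ φ' η') :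
    EqOn φ φ' (Ici 0) ∧ EqOn η η' (Ici 0) := by
  obtain ⟨-, -, hadd, hzero, hinit, hconst⟩ := h
  obtain ⟨-, -, hadd', hzero', hinit', hconst'⟩ := h'
  have at_zero : ∀ s, 0 ≤ s → Z s = 0 → η s = η' s := fun s hs hZs => by
    linarith [hadd s hs, hadd' s hs, hzero s hs hZs, hzero' s hs hZs]
  have propagate : ∀ s t, 0 ≤ s → s ≤ t → (∀ u ∈ Ioc s t, 0 < Z u) → η s = η' s →
      η t = η' t := by
    intro s t hs hst hpos hs'
    rcases hst.eq_or_lt with rfl | hst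
    · exact hs'
    · rw [hconst s t hs hst hpos, hconst' s t hs hst hpos, hs']
  have hη : EqOn η η' (Ici 0) := by
    intro t (ht : 0 ≤ t)
    set K := Icc 0 t ∩ Z ⁻¹' {0}
    have hKc : IsCompact K := isCompact_Icc.of_isClosed_subset
      ((hZc.mono Icc_subset_Ici_self).preimage_isClosed_of_isClosed isClosed_Icc isClosed_singleton)
      inter_subset_left
    have hposK : ∀ u ∈ Icc 0 t, u ∉ K → 0 < Z u := fun u hu huK =>
      (hZ0 u hu.1).lt_of_ne' fun hZu => huK ⟨hu, hZu⟩
    rcases K.eq_empty_or_nonempty with hK | hK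
    · have hpos : ∀ u ∈ Icc 0 t, 0 < Z u := fun u hu => hposK u hu (hK ▸ notMem_empty u)
      refine propagate 0 t le_rfl ht (fun u hu => hpos u (Ioc_subset_Icc_self hu)) ?_
      rw [hinit (hpos 0 ⟨le_rfl, ht⟩), hinit' (hpos 0 ⟨le_rfl, ht⟩)]
    · obtain ⟨⟨hs0, hst⟩, hZs⟩ := hKc.sSup_mem hK
      refine propagate _ t hs0 hst (fun u hu => hposK u ⟨hs0.trans hu.1.le, hu.2⟩ fun huK =>
        hu.1.not_ge (le_csSup hKc.bddAbove huK)) (at_zero _ hs0 hZs)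
  exact ⟨fun t ht => by rw [hadd t ht, hadd' t ht, hη ht], hη⟩

end Uniqueness

lemma exists_continuous_eqOn_Ici {f : ℝ → ℝ} (hf : ContinuousOn f (Ici 0)) :
    ∃ g : ℝ → ℝ, Continuous g ∧ EqOn g f (Ici 0) :=
  ⟨fun s => f (max s 0), hf.comp_continuous (by fun_prop) fun s => le_max_right s 0,
    fun s (hs : 0 ≤ s) => congrArg f (max_eq_left hs)⟩

namespace Skorokhod

/-- The right derivative at `m` of `max · 0` in the direction `d`. -/
def maxZeroDeriv (m d : ℝ) : ℝ := if 0 < m then d else if m = 0 then max d 0 else 0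

section MaxZeroDeriv

variable {m d : ℝ}

lemma maxZeroDeriv_of_pos (hm : 0 < m) : maxZeroDeriv m d = d := if_pos hm

lemma maxZeroDeriv_zero (d : ℝ) : maxZeroDeriv 0 d = max d 0 := by simp [maxZeroDeriv]

lemma maxZeroDeriv_of_neg (hm : m < 0) : maxZeroDeriv m d = 0 := by
  simp [maxZeroDeriv, hm.not_gt, hm.ne]

lemma continuous_maxZeroDeriv (m : ℝ) : Continuous (maxZeroDeriv m) := by
  unfold maxZeroDeriv
  split_ifs <;> fun_prop

lemma add_maxZeroDeriv_max_neg (p : ℝ) (hm : 0 ≤ m) :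
    p + maxZeroDeriv m (max (-p) d) = max (p + maxZeroDeriv m d) 0 := by
  rcases hm.lt_or_eq with hm | rfl
  · simp only [maxZeroDeriv_of_pos hm]
    rw [← max_add_add_left, add_neg_cancel, max_comm]
  · simp only [maxZeroDeriv_zero, max_def]
    split_ifs <;> linarith

theorem tendsto_max_zero_sub_div {a : ℝ → ℝ}
    (h : Tendsto (fun ε => (a ε - m) / ε) (𝓝[>] 0) (𝓝 d)) :
    Tendsto (fun ε => (max (a ε) 0 - max m 0) / ε) (𝓝[>] 0) (𝓝 (maxZeroDeriv m d)) := by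
  have ha : Tendsto a (𝓝[>] 0) (𝓝 m) := by
    have : Tendsto (fun ε => m + ε * ((a ε - m) / ε)) (𝓝[>] 0) (𝓝 (m + 0 * d)) :=
      tendsto_const_nhds.add ((tendsto_nhdsWithin_of_tendsto_nhds tendsto_id).mul h)
    rw [zero_mul, add_zero] at this
    refine this.congr' ?_
    filter_upwards [self_mem_nhdsWithin] with ε (hε : 0 < ε)
    field_simp
    ring
  rcases lt_trichotomy m 0 with hm | rfl | hm
  · rw [maxZeroDeriv_of_neg hm]
    refine tendsto_const_nhds.congr' ?_
    filter_upwards [ha.eventually (gt_mem_nhds hm)] with ε hε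
    rw [max_eq_right hε.le, max_eq_right hm.le, sub_self, zero_div]
  · rw [maxZeroDeriv_zero]
    refine (h.max tendsto_const_nhds).congr' ?_
    filter_upwards [self_mem_nhdsWithin] with ε (hε : 0 < ε)
    rw [max_self, sub_zero, sub_zero, ← max_div_div_right hε.le, zero_div]
  · rw [maxZeroDeriv_of_pos hm]
    refine h.congr' ?_
    filter_upwards [ha.eventually (lt_mem_nhds hm)] with ε hε
    rw [max_eq_left hε.le, max_eq_left hm.le]

end MaxZeroDeriv

def runMax (X : ℝ → ℝ) (t : ℝ) : ℝ := sSup ((fun s => -X s) '' Icc 0 t)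

def argmaxSet (X : ℝ → ℝ) (t : ℝ) : Set ℝ := {s ∈ Icc 0 t | -X s = runMax X t}

lemma SM1_eq_add_max_runMax (X : ℝ → ℝ) (t : ℝ) : SM1 X t = X t + max (runMax X t) 0 := rfl

lemma runMax_congr {X X' : ℝ → ℝ} {t : ℝ} (h : EqOn X X' (Icc 0 t)) :
    runMax X t = runMax X' t := by
  rw [runMax, runMax, image_congr fun s hs => congrArg Neg.neg (h hs)]

lemma SM1_congr {X X' : ℝ → ℝ} {t : ℝ} (ht : 0 ≤ t) (h : EqOn X X' (Icc 0 t)) :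
    SM1 X t = SM1 X' t := by
  rw [SM1_eq_add_max_runMax, SM1_eq_add_max_runMax, runMax_congr h, h ⟨ht, le_rfl⟩]

lemma runMax_zero (X : ℝ → ℝ) : runMax X 0 = -X 0 := by
  simp [runMax]

lemma runMax_le {X : ℝ → ℝ} {t c : ℝ} (ht : 0 ≤ t) (h : ∀ s ∈ Icc 0 t, -X s ≤ c) :
    runMax X t ≤ c :=
  csSup_le ((nonempty_Icc.2 ht).image _) (by rintro _ ⟨s, hs, rfl⟩; exact h s hs)

section RunMax

variable {X : ℝ → ℝ} (hX : Continuous X) {s t u : ℝ}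
include hX

lemma le_runMax (hs : s ∈ Icc 0 t) : -X s ≤ runMax X t :=
  le_csSup (isCompact_Icc.bddAbove_image hX.neg.continuousOn) (mem_image_of_mem _ hs)

lemma runMax_mono (ht : 0 ≤ t) (htu : t ≤ u) : runMax X t ≤ runMax X u :=
  runMax_le ht fun _ hs => le_runMax hX ⟨hs.1, hs.2.trans htu⟩

lemma continuousOn_runMax : ContinuousOn (runMax X) (Ici 0) := by
  have hc : Continuous fun u : ℝ => sSup ((fun θ => -X (θ * u)) '' Icc 0 1) :=
    isCompact_Icc.continuous_sSup (by fun_prop)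
  refine hc.continuousOn.congr fun u (hu : 0 ≤ u) => ?_
  show _ = sSup (((fun s => -X s) ∘ fun θ => θ * u) '' Icc 0 1)
  rw [image_comp, image_mul_right_Icc zero_le_one hu, zero_mul, one_mul, runMax]

lemma continuousOn_SM1 : ContinuousOn (SM1 X) (Ici 0) :=
  hX.continuousOn.add ((continuousOn_runMax hX).sup continuousOn_const)

lemma SM1_nonneg (ht : 0 ≤ t) : 0 ≤ SM1 X t := by
  have := le_runMax hX ⟨ht, le_rfl⟩
  rw [SM1_eq_add_max_runMax]
  linarith [le_max_left (runMax X t) 0]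

lemma isCompact_argmaxSet : IsCompact (argmaxSet X t) :=
  isCompact_Icc.inter_right (isClosed_eq hX.neg continuous_const)

lemma argmaxSet_nonempty (ht : 0 ≤ t) : (argmaxSet X t).Nonempty := by
  obtain ⟨s, hs, hmax⟩ := isCompact_Icc.exists_sSup_image_eq (nonempty_Icc.2 ht)
    hX.neg.continuousOn
  exact ⟨s, hs, hmax.symm⟩

lemma argmaxSet_subset_Ioc (hlt : runMax X s < runMax X u) :
    argmaxSet X u ⊆ Ioc s u := fun _ hm =>
  ⟨lt_of_not_ge fun hms => hlt.not_ge (hm.2 ▸ le_runMax hX ⟨hm.1.1, hms⟩), hm.1.2⟩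

lemma SM1_eq_zero_iff (ht : 0 ≤ t) :
    SM1 X t = 0 ↔ 0 ≤ runMax X t ∧ t ∈ argmaxSet X t := by
  have hle := le_runMax hX ⟨ht, le_rfl⟩
  rw [SM1_eq_add_max_runMax]
  constructor
  · intro h
    have hM : runMax X t ≤ -X t := by linarith [le_max_left (runMax X t) 0]
    have h0 : 0 ≤ -X t := by linarith [le_max_right (runMax X t) 0]
    exact ⟨h0.trans hle, ⟨ht, le_rfl⟩, le_antisymm hle hM⟩
  · rintro ⟨hM, -, hXt⟩
    rw [max_eq_left hM, ← hXt, add_neg_cancel]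

lemma eventually_runMax_eq_and_argmaxSet_eq (ht : 0 ≤ t) (hlt : -X t < runMax X t) :
    ∀ᶠ u in 𝓝[Ici 0] t, runMax X u = runMax X t ∧ argmaxSet X u = argmaxSet X t := by
  obtain ⟨l, r, ⟨hl, hr⟩, hlr⟩ := mem_nhds_iff_exists_Ioo_subset.1
    (hX.neg.continuousAt.eventually (gt_mem_nhds hlt))
  have hle : ∀ s ∈ argmaxSet X t, s ≤ l := fun s hs =>
    not_lt.1 fun hls => (hlr ⟨hls, hs.1.2.trans_lt hr⟩ : -X s < runMax X t).ne hs.2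
  obtain ⟨s₀, hs₀⟩ := argmaxSet_nonempty hX ht
  filter_upwards [self_mem_nhdsWithin, mem_nhdsWithin_of_mem_nhds (Ioo_mem_nhds hl hr)]
    with u (hu : 0 ≤ u) ⟨hlu, hur⟩
  have hbelow : ∀ s ∈ Icc 0 u, l < s → -X s < runMax X t := fun s hs hls =>
    hlr ⟨hls, hs.2.trans_lt hur⟩
  have hMu : runMax X u = runMax X t := by
    refine le_antisymm (runMax_le hu fun s hs => ?_) ?_
    · rcases le_or_gt s l with hsl | hls
      · exact le_runMax hX ⟨hs.1, hsl.trans hl.le⟩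
      · exact (hbelow s hs hls).le
    · exact hs₀.2 ▸ le_runMax hX ⟨hs₀.1.1, (hle s₀ hs₀).trans hlu.le⟩
  refine ⟨hMu, Set.ext fun s => ⟨fun hs => ?_, fun hs => ?_⟩⟩
  · have hsl : s ≤ l := not_lt.1 fun hls => (hbelow s hs.1 hls).ne (hs.2.trans hMu)
    exact ⟨⟨hs.1.1, hsl.trans hl.le⟩, hs.2.trans hMu⟩
  · exact ⟨⟨hs.1.1, (hle s hs).trans hlu.le⟩, hs.2.trans hMu.symm⟩

lemma runMax_eq_and_argmaxSet_eq_inter {s₀ : ℝ} (hs₀ : s₀ ∈ argmaxSet X t) (hu : u ∈ Icc s₀ t) :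
    runMax X u = runMax X t ∧ argmaxSet X u = argmaxSet X t ∩ Iic u := by
  have hMu : runMax X u = runMax X t := le_antisymm (runMax_mono hX (hs₀.1.1.trans hu.1) hu.2)
    (hs₀.2 ▸ le_runMax hX ⟨hs₀.1.1, hu.1⟩)
  refine ⟨hMu, Set.ext fun s => ⟨fun hs => ?_, fun hs => ?_⟩⟩
  · exact ⟨⟨⟨hs.1.1, hs.1.2.trans hu.2⟩, hs.2.trans hMu⟩, hs.1.2⟩
  · exact ⟨⟨hs.1.1.1, hs.2⟩, hs.1.2.trans hMu.symm⟩

lemma runMax_neg_or_eq_of_SM1_pos (hs : 0 ≤ s) (hst : s ≤ t) (hpos : ∀ u ∈ Ioc s t, 0 < SM1 X u) :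
    runMax X t < 0 ∨ (runMax X t = runMax X s ∧ argmaxSet X t = argmaxSet X s) := by
  -- a maximiser `w > s` with `-X w ≥ 0` would be a zero of `SM1 X` in `(s, t]`
  have hle : ∀ w ∈ argmaxSet X t, 0 ≤ -X w → w ≤ s := by
    intro w hw h0
    refine not_lt.1 fun hsw => (hpos w ⟨hsw, hw.1.2⟩).ne' ((SM1_eq_zero_iff hX hw.1.1).2 ?_)
    have hMw : runMax X w = -X w := le_antisymm ((runMax_mono hX hw.1.1 hw.1.2).trans hw.2.ge)
      (le_runMax hX ⟨hw.1.1, le_rfl⟩)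
    exact ⟨hMw ▸ h0, ⟨hw.1.1, le_rfl⟩, hMw.symm⟩
  rcases lt_or_ge (runMax X t) 0 with hM | hM
  · exact Or.inl hM
  obtain ⟨w, hw⟩ := argmaxSet_nonempty hX (hs.trans hst)
  have hMs : runMax X t = runMax X s :=
    le_antisymm (hw.2.ge.trans (le_runMax hX ⟨hw.1.1, hle w hw (hw.2 ▸ hM)⟩))
      (runMax_mono hX hs hst)
  refine Or.inr ⟨hMs, Set.ext fun x => ⟨fun hx => ?_, fun hx => ?_⟩⟩
  · exact ⟨⟨hx.1.1, hle x hx (hx.2 ▸ hM)⟩, hx.2.trans hMs⟩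
  · exact ⟨⟨hx.1.1, hx.1.2.trans hst⟩, hx.2.trans hMs.symm⟩

end RunMax

def supArgmax (X ψ : ℝ → ℝ) (t : ℝ) : ℝ := sSup ((fun s => -ψ s) '' argmaxSet X t)

def derivSM1 (X ψ : ℝ → ℝ) (t : ℝ) : ℝ := ψ t + maxZeroDeriv (runMax X t) (supArgmax X ψ t)

lemma derivSM1_zero_of_pos {X ψ : ℝ → ℝ} (h : 0 < X 0) : derivSM1 X ψ 0 = ψ 0 := by
  rw [derivSM1, maxZeroDeriv_of_neg (by rw [runMax_zero]; linarith), add_zero]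

lemma derivSM1_zero_of_eq_zero {X ψ : ℝ → ℝ} (h : X 0 = 0) : derivSM1 X ψ 0 = max (ψ 0) 0 := by
  have hM : runMax X 0 = 0 := by rw [runMax_zero, h, neg_zero]
  have hS : argmaxSet X 0 = {0} := by
    refine Set.ext fun s => ⟨fun hs => ?_, fun hs => ?_⟩
    · exact le_antisymm hs.1.2 hs.1.1
    · rw [mem_singleton_iff.1 hs]
      exact ⟨left_mem_Icc.2 le_rfl, (runMax_zero X).symm⟩
  rw [derivSM1, supArgmax, hM, hS, image_singleton, csSup_singleton, maxZeroDeriv_zero,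
    ← max_add_add_left, add_neg_cancel, add_zero, max_comm]

section Deriv

variable {X ψ : ℝ → ℝ} (hX : Continuous X) (hψ : Continuous ψ) {s t : ℝ}
include hX hψ

theorem tendsto_derivSM1 (ht : 0 ≤ t) :
    Tendsto (fun ε : ℝ => (SM1 (fun s => X s + ε * ψ s) t - SM1 X t) / ε)
      (𝓝[>] 0) (𝓝 (derivSM1 X ψ t)) := by
  have hsup : Tendsto (fun ε : ℝ =>
      (sSup ((fun s => -X s + ε * -ψ s) '' Icc 0 t) - runMax X t) / ε)
      (𝓝[>] 0) (𝓝 (supArgmax X ψ t)) :=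
    tendsto_sSup_image_add_mul_sub_div isCompact_Icc (nonempty_Icc.2 ht) hX.neg hψ.neg
  refine (tendsto_const_nhds.add (tendsto_max_zero_sub_div hsup)).congr' ?_
  filter_upwards [self_mem_nhdsWithin] with ε (hε : 0 < ε)
  have : (fun s => -(X s + ε * ψ s)) = fun s => -X s + ε * -ψ s := by
    funext s
    ring
  rw [SM1, this, SM1_eq_add_max_runMax]
  field_simp
  ring

lemma exists_supArgmax_eq (ht : 0 ≤ t) : ∃ m ∈ argmaxSet X t, supArgmax X ψ t = -ψ m :=
  (isCompact_argmaxSet hX).exists_sSup_image_eq (argmaxSet_nonempty hX ht) hψ.neg.continuousOn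

lemma bddAbove_image_argmaxSet : BddAbove ((fun s => -ψ s) '' argmaxSet X t) :=
  (isCompact_argmaxSet hX).bddAbove_image hψ.neg.continuousOn

lemma neg_le_supArgmax (hs : s ∈ argmaxSet X t) : -ψ s ≤ supArgmax X ψ t :=
  le_csSup (bddAbove_image_argmaxSet hX hψ) (mem_image_of_mem _ hs)

lemma tendsto_supArgmax_of_concentrated {l : Filter ℝ}
    (h : ∀ δ > 0, ∀ᶠ u in l, 0 ≤ u ∧ argmaxSet X u ⊆ Ioo (t - δ) (t + δ)) :
    Tendsto (supArgmax X ψ) l (𝓝 (-ψ t)) := by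
  rw [Metric.tendsto_nhds]
  intro ε hε
  obtain ⟨δ, hδ, hψδ⟩ := Metric.continuousAt_iff.1 hψ.continuousAt ε hε
  filter_upwards [h δ hδ] with u ⟨hu, hS⟩
  obtain ⟨m, hm, hJ⟩ := exists_supArgmax_eq hX hψ hu
  rw [hJ, dist_neg_neg]
  exact hψδ (Metric.mem_ball.1 (Real.ball_eq_Ioo t δ ▸ hS hm))

lemma tendsto_derivSM1_zero_of_concentrated {l : Filter ℝ} (hl : l ≤ 𝓝 t)
    (hpos : ∀ᶠ u in l, 0 < runMax X u)
    (h : ∀ δ > 0, ∀ᶠ u in l, 0 ≤ u ∧ argmaxSet X u ⊆ Ioo (t - δ) (t + δ)) :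
    Tendsto (derivSM1 X ψ) l (𝓝 0) := by
  have := ((hψ.tendsto t).mono_left hl).add (tendsto_supArgmax_of_concentrated hX hψ h)
  rw [add_neg_cancel] at this
  refine this.congr' ?_
  filter_upwards [hpos] with u hu
  rw [derivSM1, maxZeroDeriv_of_pos hu]

/-- Away from the zeros of `SM1 X`, `derivSM1 X ψ - ψ` is locally constant. -/
lemma continuousWithinAt_derivSM1 (ht : 0 ≤ t) (hZ : SM1 X t ≠ 0) :
    ContinuousWithinAt (derivSM1 X ψ) (Ici 0) t := by
  have hconst : ∀ᶠ u in 𝓝[Ici 0] t, maxZeroDeriv (runMax X u) (supArgmax X ψ u)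
      = maxZeroDeriv (runMax X t) (supArgmax X ψ t) := by
    rcases lt_or_ge (runMax X t) 0 with hM | hM
    · filter_upwards [(continuousOn_runMax hX t ht).eventually (gt_mem_nhds hM)] with u hu
      rw [maxZeroDeriv_of_neg hu, maxZeroDeriv_of_neg hM]
    · have hlt : -X t < runMax X t := by
        have := (SM1_nonneg hX ht).lt_of_ne' hZ
        rw [SM1_eq_add_max_runMax, max_eq_left hM] at this
        linarith
      filter_upwards [eventually_runMax_eq_and_argmaxSet_eq hX ht hlt] with u ⟨hM, hS⟩
      rw [supArgmax, supArgmax, hM, hS]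
  refine (hψ.continuousWithinAt.add continuousWithinAt_const).congr_of_eventuallyEq ?_ rfl
  filter_upwards [hconst] with u hu
  rw [derivSM1, hu]
  rfl

lemma continuousAt_derivSM1 (ht : 0 < t) (hZ : SM1 X t ≠ 0) :
    ContinuousAt (derivSM1 X ψ) t :=
  (continuousWithinAt_derivSM1 hX hψ ht.le hZ).continuousAt (Ici_mem_nhds ht)

end Deriv

section OneSidedLimits

variable {X ψ : ℝ → ℝ} (hX : Continuous X) (hψ : Continuous ψ) {t : ℝ}
include hX hψ

lemma tendsto_supArgmax_nhdsLT {s₀ : ℝ} (hs₀ : s₀ ∈ argmaxSet X t) (hs₀t : s₀ < t) :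
    Tendsto (supArgmax X ψ) (𝓝[<] t)
      (𝓝 (sSup ((fun s => -ψ s) '' (argmaxSet X t ∩ Iio t)))) := by
  set A := argmaxSet X t ∩ Iio t
  have hAne : ((fun s => -ψ s) '' A).Nonempty := ⟨_, mem_image_of_mem _ ⟨hs₀, hs₀t⟩⟩
  have hSu : ∀ u ∈ Ico s₀ t, argmaxSet X u = argmaxSet X t ∩ Iic u := fun u hu =>
    (runMax_eq_and_argmaxSet_eq_inter hX hs₀ ⟨hu.1, hu.2.le⟩).2
  rw [tendsto_order]
  refine ⟨fun b hb => ?_, fun b hb => ?_⟩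
  · obtain ⟨_, ⟨x, hx, rfl⟩, hbx⟩ := exists_lt_of_lt_csSup hAne hb
    filter_upwards [Ico_mem_nhdsLT (max_lt hs₀t hx.2)] with u hu
    have hxu : x ∈ argmaxSet X u := (hSu u ⟨(le_max_left _ _).trans hu.1, hu.2⟩) ▸
      ⟨hx.1, (le_max_right _ _).trans hu.1⟩
    exact hbx.trans_le (neg_le_supArgmax hX hψ hxu)
  · filter_upwards [Ico_mem_nhdsLT hs₀t] with u hu
    obtain ⟨m, hm, hJm⟩ := exists_supArgmax_eq hX hψ (hs₀.1.1.trans hu.1)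
    rw [hSu u hu] at hm
    exact hJm ▸ (le_csSup ((bddAbove_image_argmaxSet hX hψ).mono (image_mono inter_subset_left))
      (mem_image_of_mem _ (⟨hm.1, hm.2.trans_lt hu.2⟩ : m ∈ A))).trans_lt hb

lemma exists_tendsto_nhdsLT_of_mem_argmaxSet (ht : 0 < t) (hZ : SM1 X t = 0) {s₀ : ℝ}
    (hs₀ : s₀ ∈ argmaxSet X t) (hs₀t : s₀ < t) :
    ∃ L, Tendsto (derivSM1 X ψ) (𝓝[<] t) (𝓝 L) ∧ derivSM1 X ψ t = max L 0 := by
  obtain ⟨hM0, htS⟩ := (SM1_eq_zero_iff hX ht.le).1 hZ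
  set A := argmaxSet X t ∩ Iio t
  have hJt : supArgmax X ψ t = max (-ψ t) (sSup ((fun s => -ψ s) '' A)) := by
    have hSt : argmaxSet X t = insert t A := Set.ext fun s =>
      ⟨fun hs => hs.1.2.eq_or_lt.imp id fun h => ⟨hs, h⟩, fun hs => hs.elim (· ▸ htS) (·.1)⟩
    rw [supArgmax, hSt, image_insert_eq, csSup_insert
      ((bddAbove_image_argmaxSet hX hψ).mono (image_mono inter_subset_left))
      ⟨_, mem_image_of_mem _ ⟨hs₀, hs₀t⟩⟩]
  refine ⟨ψ t + maxZeroDeriv (runMax X t) (sSup ((fun s => -ψ s) '' A)), ?_, ?_⟩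
  · refine (((hψ.tendsto t).mono_left nhdsWithin_le_nhds).add
      ((continuous_maxZeroDeriv _).continuousAt.tendsto.comp
        (tendsto_supArgmax_nhdsLT hX hψ hs₀ hs₀t))).congr' ?_
    filter_upwards [Ico_mem_nhdsLT hs₀t] with u hu
    rw [derivSM1, (runMax_eq_and_argmaxSet_eq_inter hX hs₀ ⟨hu.1, hu.2.le⟩).1]
    rfl
  · rw [derivSM1, hJt, add_maxZeroDeriv_max_neg _ hM0]

lemma exists_tendsto_nhdsLT_of_argmaxSet_subset (ht : 0 < t) (hZ : SM1 X t = 0)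
    (hS : argmaxSet X t ⊆ {t}) :
    ∃ L, Tendsto (derivSM1 X ψ) (𝓝[<] t) (𝓝 L) ∧ derivSM1 X ψ t = max L 0 := by
  obtain ⟨hM0, htS⟩ := (SM1_eq_zero_iff hX ht.le).1 hZ
  have hJt : supArgmax X ψ t = -ψ t := by
    rw [supArgmax, subset_antisymm hS (singleton_subset_iff.2 htS), image_singleton,
      csSup_singleton]
  have hlt : ∀ u ∈ Ico 0 t, runMax X u < runMax X t := by
    intro u hu
    obtain ⟨m, hm⟩ := argmaxSet_nonempty hX hu.1
    refine (runMax_mono hX hu.1 hu.2.le).lt_of_ne fun h => ?_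
    have hmt : m ∈ argmaxSet X t := ⟨⟨hm.1.1, hm.1.2.trans hu.2.le⟩, hm.2.trans h⟩
    exact (hm.1.2.trans_lt hu.2).ne (hS hmt)
  have hMc : ContinuousAt (runMax X) t :=
    (continuousOn_runMax hX t ht.le).continuousAt (Ici_mem_nhds ht)
  rcases hM0.lt_or_eq with hMpos | hM0
  · refine ⟨0, tendsto_derivSM1_zero_of_concentrated hX hψ nhdsWithin_le_nhds
      (nhdsWithin_le_nhds (hMc.eventually (lt_mem_nhds hMpos))) fun δ hδ => ?_, ?_⟩
    · set a := max (t - δ / 2) 0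
      have hat : a < t := max_lt (by linarith) ht
      filter_upwards [Ioo_mem_nhdsLT hat, nhdsWithin_le_nhds
        (hMc.eventually (lt_mem_nhds (hlt a ⟨le_max_right _ _, hat⟩)))] with u hu hMu
      exact ⟨(le_max_right _ _).trans hu.1.le, (argmaxSet_subset_Ioc hX hMu).trans
        (Ioc_subset_Icc_self.trans (Icc_subset_Ioo (by linarith [le_max_left (t - δ / 2) 0])
          (by linarith [hu.2])))⟩
    · rw [derivSM1, hJt, maxZeroDeriv_of_pos hMpos, add_neg_cancel, max_self]
  · refine ⟨ψ t, ((hψ.tendsto t).mono_left nhdsWithin_le_nhds).congr' ?_, ?_⟩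
    · filter_upwards [Ico_mem_nhdsLT ht] with u hu
      rw [derivSM1, maxZeroDeriv_of_neg (hM0 ▸ hlt u hu), add_zero]
    · rw [derivSM1, hJt, ← hM0, maxZeroDeriv_zero, ← max_add_add_left, add_neg_cancel,
        add_zero, max_comm]

theorem exists_tendsto_nhdsLT_of_SM1_eq_zero (ht : 0 < t) (hZ : SM1 X t = 0) :
    ∃ L, Tendsto (derivSM1 X ψ) (𝓝[<] t) (𝓝 L) ∧ derivSM1 X ψ t = max L 0 := by
  by_cases h : ∃ s ∈ argmaxSet X t, s < t
  · obtain ⟨s, hs, hst⟩ := h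
    exact exists_tendsto_nhdsLT_of_mem_argmaxSet hX hψ ht hZ hs hst
  · push Not at h
    exact exists_tendsto_nhdsLT_of_argmaxSet_subset hX hψ ht hZ fun s hs =>
      le_antisymm hs.1.2 (h s hs)

lemma exists_tendsto_nhdsLT (ht : 0 < t) : ∃ L, Tendsto (derivSM1 X ψ) (𝓝[<] t) (𝓝 L) := by
  by_cases hZ : SM1 X t = 0
  · obtain ⟨L, hL, -⟩ := exists_tendsto_nhdsLT_of_SM1_eq_zero hX hψ ht hZ
    exact ⟨L, hL⟩
  · exact ⟨_, (continuousAt_derivSM1 hX hψ ht hZ).tendsto.mono_left nhdsWithin_le_nhds⟩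

lemma tendsto_nhdsGT_of_runMax_eq (ht : 0 ≤ t) (htS : t ∈ argmaxSet X t) {τ : ℝ} (hτ : t < τ)
    (hMτ : runMax X τ = runMax X t) :
    Tendsto (derivSM1 X ψ) (𝓝[>] t) (𝓝 (derivSM1 X ψ t)) := by
  have hMu : ∀ u ∈ Ioc t τ, runMax X u = runMax X t := fun u hu =>
    le_antisymm (hMτ ▸ runMax_mono hX (ht.trans hu.1.le) hu.2) (runMax_mono hX ht hu.1.le)
  have hJ : Tendsto (supArgmax X ψ) (𝓝[>] t) (𝓝 (supArgmax X ψ t)) := by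
    rw [tendsto_order]
    refine ⟨fun b hb => ?_, fun b hb => ?_⟩
    · filter_upwards [Ioc_mem_nhdsGT hτ] with u hu
      obtain ⟨m, hm, hJm⟩ := exists_supArgmax_eq hX hψ ht
      have hmu : m ∈ argmaxSet X u := ⟨⟨hm.1.1, hm.1.2.trans hu.1.le⟩, hm.2.trans (hMu u hu).symm⟩
      exact hb.trans_le (hJm ▸ neg_le_supArgmax hX hψ hmu)
    · obtain ⟨r, hr, hsub⟩ := exists_Ico_subset_of_mem_nhds (hψ.neg.continuousAt.eventually
        (gt_mem_nhds ((neg_le_supArgmax hX hψ htS).trans_lt hb))) ⟨_, lt_add_one t⟩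
      filter_upwards [Ioo_mem_nhdsGT (lt_min hr hτ)] with u hu
      have hu' : u ∈ Ioc t τ := ⟨hu.1, hu.2.le.trans (min_le_right _ _)⟩
      obtain ⟨m, hm, hJm⟩ := exists_supArgmax_eq hX hψ (ht.trans hu.1.le)
      rw [hJm]
      rcases le_or_gt m t with hmt | hmt
      · exact (neg_le_supArgmax hX hψ ⟨⟨hm.1.1, hmt⟩, hm.2.trans (hMu u hu')⟩).trans_lt hb
      · exact hsub ⟨hmt.le, hm.1.2.trans_lt (hu.2.trans_le (min_le_left _ _))⟩
  refine (((hψ.tendsto t).mono_left nhdsWithin_le_nhds).add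
    ((continuous_maxZeroDeriv _).continuousAt.tendsto.comp hJ)).congr' ?_
  filter_upwards [Ioc_mem_nhdsGT hτ] with u hu
  rw [derivSM1, hMu u hu]
  rfl

lemma tendsto_nhdsGT_of_runMax_lt (ht : 0 ≤ t) (hM : 0 ≤ runMax X t)
    (hlt : ∀ u, t < u → runMax X t < runMax X u) :
    Tendsto (derivSM1 X ψ) (𝓝[>] t) (𝓝 0) := by
  refine tendsto_derivSM1_zero_of_concentrated hX hψ nhdsWithin_le_nhds ?_ fun δ hδ => ?_
  · filter_upwards [self_mem_nhdsWithin] with u hu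
    exact hM.trans_lt (hlt u hu)
  · filter_upwards [Ioo_mem_nhdsGT (lt_add_of_pos_right t hδ)] with u hu
    exact ⟨ht.trans hu.1.le, (argmaxSet_subset_Ioc hX (hlt u hu.1)).trans
      (Ioc_subset_Icc_self.trans (Icc_subset_Ioo (by linarith) hu.2))⟩

theorem tendsto_nhdsGT_of_SM1_eq_zero (ht : 0 ≤ t) (hZ : SM1 X t = 0) :
    Tendsto (derivSM1 X ψ) (𝓝[>] t) (𝓝 (derivSM1 X ψ t)) ∨
      Tendsto (derivSM1 X ψ) (𝓝[>] t) (𝓝 0) := by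
  obtain ⟨hM0, htS⟩ := (SM1_eq_zero_iff hX ht).1 hZ
  by_cases h : ∃ τ, t < τ ∧ runMax X τ = runMax X t
  · obtain ⟨τ, hτ, hMτ⟩ := h
    exact Or.inl (tendsto_nhdsGT_of_runMax_eq hX hψ ht htS hτ hMτ)
  · push Not at h
    exact Or.inr (tendsto_nhdsGT_of_runMax_lt hX hψ ht hM0 fun u hu =>
      (runMax_mono hX ht hu.le).lt_of_ne (h u hu).symm)

theorem dlr1_derivSM1 : Dlr1 (derivSM1 X ψ) := by
  refine ⟨fun t ht => exists_tendsto_nhdsLT hX hψ ht, fun t ht => ?_, fun t ht => ?_⟩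
  · by_cases hZ : SM1 X t = 0
    · exact (tendsto_nhdsGT_of_SM1_eq_zero hX hψ ht hZ).elim (⟨_, ·⟩) (⟨_, ·⟩)
    · exact ⟨_, (continuousWithinAt_derivSM1 hX hψ ht hZ).tendsto.mono_left
        (nhdsWithin_mono _ fun u hu => ht.trans (le_of_lt hu))⟩
  · by_cases hZ : SM1 X t = 0
    · obtain ⟨L, hL, hgt⟩ := exists_tendsto_nhdsLT_of_SM1_eq_zero hX hψ ht hZ
      rcases le_or_gt 0 L with hL0 | hL0
      · exact Or.inl (by rwa [hgt, max_eq_left hL0])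
      · have hg0 : derivSM1 X ψ t = 0 := by rw [hgt, max_eq_right hL0.le]
        exact Or.inr ((tendsto_nhdsGT_of_SM1_eq_zero hX hψ ht.le hZ).elim id (hg0 ▸ ·))
    · exact Or.inl ((continuousAt_derivSM1 hX hψ ht hZ).tendsto.mono_left nhdsWithin_le_nhds)

theorem SM1_eq_zero_and_tendsto_nhdsLT_iff (ht : 0 < t) (hd : ¬ContinuousAt (derivSM1 X ψ) t) :
    SM1 X t = 0 ∧ ∀ Lm : ℝ, Tendsto (derivSM1 X ψ) (𝓝[<] t) (𝓝 Lm) →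
      (Tendsto (derivSM1 X ψ) (𝓝[<] t) (𝓝 (derivSM1 X ψ t)) ↔ 0 ≤ Lm) := by
  have hZ : SM1 X t = 0 := by_contra fun hZ => hd (continuousAt_derivSM1 hX hψ ht hZ)
  refine ⟨hZ, fun Lm hLm => ?_⟩
  obtain ⟨L, hL, hgt⟩ := exists_tendsto_nhdsLT_of_SM1_eq_zero hX hψ ht hZ
  obtain rfl := tendsto_nhds_unique hLm hL
  refine ⟨fun h => ?_, fun h => by rwa [hgt, max_eq_left h]⟩
  rw [tendsto_nhds_unique h hLm] at hgt
  exact hgt ▸ le_max_right _ _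

end OneSidedLimits

/-- Condition (1) of the boundary jitter property, with `Y = max (runMax X) 0`. -/
def JitterAtZeros (X : ℝ → ℝ) : Prop :=
  ∀ t : ℝ, 0 ≤ t → SM1 X t = 0 → ∀ s u : ℝ, s < t → t < u →
    ∃ a ∈ Ioo (max s 0) u, ∃ b ∈ Ioo (max s 0) u, max (runMax X a) 0 ≠ max (runMax X b) 0

section Jitter

variable {X ψ : ℝ → ℝ} (hX : Continuous X) {b t u : ℝ}
include hX

/-- `max (runMax X) 0` is monotone, so it cannot be nonconstant on `(max s 0, u)` without
increasing strictly from `max s 0` to `u`. -/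
lemma JitterAtZeros.max_runMax_lt (hJ : JitterAtZeros X) (hb : 0 ≤ b) (hZ : SM1 X b = 0)
    {s : ℝ} (hs : s < b) (hu : b < u) :
    max (runMax X (max s 0)) 0 < max (runMax X u) 0 := by
  obtain ⟨a, ha, c, hc, hne⟩ := hJ b hb hZ s u hs hu
  have mono : ∀ {v w}, max s 0 ≤ v → v ≤ w → max (runMax X v) 0 ≤ max (runMax X w) 0 :=
    fun hv hvw => max_le_max_right 0 (runMax_mono hX ((le_max_right s 0).trans hv) hvw)
  by_contra hle
  push Not at hle
  exact hne (le_antisymm ((mono ha.1.le ha.2.le).trans (hle.trans (mono le_rfl hc.1.le)))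
    ((mono hc.1.le hc.2.le).trans (hle.trans (mono le_rfl ha.1.le))))

lemma JitterAtZeros.runMax_pos_and_argmaxSet_subset (hJ : JitterAtZeros X) (hb : 0 ≤ b)
    (hZ : SM1 X b = 0) (hu : b < u) :
    0 < runMax X u ∧ argmaxSet X u ⊆ Icc b u := by
  refine ⟨?_, fun m hm => ⟨not_lt.1 fun hmb => ?_, hm.1.2⟩⟩
  · have := (le_max_right _ _).trans_lt (hJ.max_runMax_lt hX hb hZ (sub_one_lt b) hu)
    exact (lt_max_iff.1 this).resolve_right (lt_irrefl 0)
  · have := hJ.max_runMax_lt hX hb hZ hmb hu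
    rw [max_eq_left hm.1.1] at this
    have hlt : runMax X m < runMax X u :=
      lt_of_not_ge fun h => this.not_ge (max_le_max_right 0 h)
    exact (argmaxSet_subset_Ioc hX hlt hm).1.false

variable (hψ : Continuous ψ)
include hψ

lemma JitterAtZeros.tendsto_nhdsGT_zero (hJ : JitterAtZeros X) (ht : 0 ≤ t) (hZ : SM1 X t = 0) :
    Tendsto (derivSM1 X ψ) (𝓝[>] t) (𝓝 0) := by
  refine tendsto_derivSM1_zero_of_concentrated hX hψ nhdsWithin_le_nhds ?_ fun δ hδ => ?_
  · filter_upwards [self_mem_nhdsWithin] with u hu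
    exact (hJ.runMax_pos_and_argmaxSet_subset hX ht hZ hu).1
  · filter_upwards [Ioo_mem_nhdsGT (lt_add_of_pos_right t hδ)] with u hu
    exact ⟨ht.trans hu.1.le, (hJ.runMax_pos_and_argmaxSet_subset hX ht hZ hu.1).2.trans
      (Icc_subset_Ioo (by linarith) hu.2)⟩

lemma JitterAtZeros.tendsto_nhdsLT_zero (hJ : JitterAtZeros X) (ht : 0 < t)
    (hfreq : ∃ᶠ u in 𝓝[<] t, SM1 X u = 0) :
    Tendsto (derivSM1 X ψ) (𝓝[<] t) (𝓝 0) := by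
  have after_zero : ∀ a < t, ∃ b ∈ Ioo (max a 0) t,
      ∀ᶠ u in 𝓝[<] t, 0 ≤ u ∧ 0 < runMax X u ∧ argmaxSet X u ⊆ Icc b u := fun a ha => by
    obtain ⟨b, hZb, hb⟩ := (hfreq.and_eventually (Ioo_mem_nhdsLT (max_lt ha ht))).exists
    have hb0 : 0 ≤ b := (le_max_right a 0).trans hb.1.le
    refine ⟨b, hb, ?_⟩
    filter_upwards [Ioo_mem_nhdsLT hb.2] with u hu
    exact ⟨hb0.trans hu.1.le, hJ.runMax_pos_and_argmaxSet_subset hX hb0 hZb hu.1⟩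
  refine tendsto_derivSM1_zero_of_concentrated hX hψ nhdsWithin_le_nhds ?_ fun δ hδ => ?_
  · obtain ⟨b, -, hev⟩ := after_zero 0 ht
    exact hev.mono fun u hu => hu.2.1
  · obtain ⟨b, hb, hev⟩ := after_zero (t - δ) (by linarith)
    filter_upwards [hev, self_mem_nhdsWithin] with u hu (hut : u < t)
    exact ⟨hu.1, hu.2.2.trans (Icc_subset_Ioo (by linarith [le_max_left (t - δ) 0, hb.1])
      (by linarith))⟩

end Jitter

def dpPhi (X ψ : ℝ → ℝ) (u : ℝ) : ℝ := if SM1 X u = 0 then 0 else derivSM1 X ψ u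

def dpEta (X ψ : ℝ → ℝ) (u : ℝ) : ℝ := dpPhi X ψ u - ψ u

section DP

variable {X ψ : ℝ → ℝ} (hX : Continuous X) (hψ : Continuous ψ) {s t : ℝ}

lemma tendsto_dpPhi_zero {l : Filter ℝ} (h : Tendsto (derivSM1 X ψ) l (𝓝 0)) :
    Tendsto (dpPhi X ψ) l (𝓝 0) := by
  refine squeeze_zero_norm (fun u => ?_) (by simpa using h.norm)
  unfold dpPhi
  split_ifs <;> simp

lemma dpPhi_eventuallyEq {l : Filter ℝ} (h : ∀ᶠ u in l, SM1 X u ≠ 0) :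
    dpPhi X ψ =ᶠ[l] derivSM1 X ψ :=
  h.mono fun _ hu => if_neg hu

lemma dpEta_zero (h : 0 < SM1 X 0) : dpEta X ψ 0 = 0 := by
  have hX0 : 0 < X 0 := by
    by_contra hle
    rw [SM1_eq_add_max_runMax, runMax_zero, max_eq_left (by linarith), add_neg_cancel] at h
    exact h.false
  rw [dpEta, dpPhi, if_neg h.ne', derivSM1_zero_of_pos hX0, sub_self]

include hX in
lemma JitterAtZeros.dpEta_eq (hJ : JitterAtZeros X) (hs : 0 ≤ s) (hst : s < t)
    (hpos : ∀ u ∈ Ioc s t, 0 < SM1 X u) : dpEta X ψ t = dpEta X ψ s := by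
  have hηt : dpEta X ψ t = maxZeroDeriv (runMax X t) (supArgmax X ψ t) := by
    rw [dpEta, dpPhi, if_neg (hpos t ⟨hst, le_rfl⟩).ne', derivSM1, add_sub_cancel_left]
  rcases runMax_neg_or_eq_of_SM1_pos hX hs hst.le hpos with hM | ⟨hM, hS⟩
  · have hMs : runMax X s < 0 := (runMax_mono hX hs hst.le).trans_lt hM
    have hZs : SM1 X s ≠ 0 := fun h => ((SM1_eq_zero_iff hX hs).1 h).1.not_gt hMs
    rw [hηt, maxZeroDeriv_of_neg hM, dpEta, dpPhi, if_neg hZs, derivSM1,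
      maxZeroDeriv_of_neg hMs, add_zero, sub_self]
  · rw [hηt, supArgmax, hM, hS]
    by_cases hZs : SM1 X s = 0
    · obtain ⟨hMpos, hsub⟩ := hJ.runMax_pos_and_argmaxSet_subset hX hs hZs hst
      have hSs : argmaxSet X s = {s} := by
        refine subset_antisymm (fun m hm => le_antisymm hm.1.2 (hsub (hS ▸ hm)).1) ?_
        exact singleton_subset_iff.2 ((SM1_eq_zero_iff hX hs).1 hZs).2
      rw [hSs, image_singleton, csSup_singleton, maxZeroDeriv_of_pos (hM ▸ hMpos), dpEta, dpPhi,
        if_pos hZs, zero_sub]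
    · rw [dpEta, dpPhi, if_neg hZs, derivSM1, supArgmax, add_sub_cancel_left]

include hX hψ

theorem JitterAtZeros.tendsto_nhdsGT_dpPhi (hJ : JitterAtZeros X) (ht : 0 ≤ t) :
    Tendsto (derivSM1 X ψ) (𝓝[>] t) (𝓝 (dpPhi X ψ t)) := by
  by_cases hZ : SM1 X t = 0
  · rw [dpPhi, if_pos hZ]
    exact hJ.tendsto_nhdsGT_zero hX hψ ht hZ
  · rw [dpPhi, if_neg hZ]
    exact (continuousWithinAt_derivSM1 hX hψ ht hZ).tendsto.mono_left
      (nhdsWithin_mono _ fun u hu => ht.trans (le_of_lt hu))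

lemma JitterAtZeros.tendsto_dpPhi_nhdsGT (hJ : JitterAtZeros X) (ht : 0 ≤ t) :
    Tendsto (dpPhi X ψ) (𝓝[>] t) (𝓝 (dpPhi X ψ t)) := by
  by_cases hZ : SM1 X t = 0
  · rw [dpPhi, if_pos hZ]
    exact tendsto_dpPhi_zero (hJ.tendsto_nhdsGT_zero hX hψ ht hZ)
  · refine (hJ.tendsto_nhdsGT_dpPhi hX hψ ht).congr' (dpPhi_eventuallyEq ?_).symm
    exact nhdsWithin_mono _ (fun u hu => ht.trans (le_of_lt hu))
      ((continuousOn_SM1 hX t ht).eventually_ne hZ)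

lemma JitterAtZeros.exists_tendsto_dpPhi_nhdsLT (hJ : JitterAtZeros X) (ht : 0 < t) :
    ∃ L, Tendsto (dpPhi X ψ) (𝓝[<] t) (𝓝 L) := by
  by_cases hfreq : ∃ᶠ u in 𝓝[<] t, SM1 X u = 0
  · exact ⟨0, tendsto_dpPhi_zero (hJ.tendsto_nhdsLT_zero hX hψ ht hfreq)⟩
  · obtain ⟨L, hL⟩ := exists_tendsto_nhdsLT hX hψ ht
    exact ⟨L, hL.congr' (dpPhi_eventuallyEq (not_frequently.1 hfreq)).symm⟩

theorem JitterAtZeros.solvesDP1 (hJ : JitterAtZeros X) :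
    SolvesDP1 (SM1 X) ψ (dpPhi X ψ) (dpEta X ψ) := by
  have hψ' : ∀ t (s : Set ℝ), Tendsto ψ (𝓝[s] t) (𝓝 (ψ t)) := fun t _ =>
    (hψ.tendsto t).mono_left nhdsWithin_le_nhds
  refine ⟨⟨fun t ht => hJ.tendsto_dpPhi_nhdsGT hX hψ ht,
      fun t ht => hJ.exists_tendsto_dpPhi_nhdsLT hX hψ ht⟩,
    ⟨fun t ht => (hJ.tendsto_dpPhi_nhdsGT hX hψ ht).sub (hψ' t _), fun t ht => ?_⟩,
    fun t _ => (add_sub_cancel _ _).symm, fun t _ hZ => if_pos hZ, dpEta_zero,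
    fun s t hs hst hpos => hJ.dpEta_eq hX hs hst hpos⟩
  obtain ⟨L, hL⟩ := hJ.exists_tendsto_dpPhi_nhdsLT hX hψ ht
  exact ⟨L - ψ t, hL.sub (hψ' t _)⟩

end DP

end Skorokhod

open Skorokhod in
theorem statement19_general
    (X : ℝ → ℝ) (hX : ContinuousOn X (Ici 0))
    (Z Y : ℝ → ℝ)
    (hZ : ∀ t : ℝ, Z t = SM1 X t)
    (hY : ∀ t : ℝ, Y t = max (sSup ((fun s => -X s) '' Icc 0 t)) 0) :
    ∀ ψ : ℝ → ℝ, ContinuousOn ψ (Ici 0) →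
      ∃ g : ℝ → ℝ,
        -- (1) existence of the directional derivative ...
        (∀ t : ℝ, 0 ≤ t →
          Tendsto (fun ε : ℝ => (SM1 (fun s => X s + ε * ψ s) t - SM1 X t) / ε)
            (𝓝[>] (0:ℝ)) (𝓝 (g t))) ∧
        -- ... lying in `D_{ℓ,r}`
        Dlr1 g ∧
        -- (2) value at `0` ...
        ((0 < X 0 → g 0 = ψ 0) ∧ (X 0 = 0 → g 0 = max (ψ 0) 0)) ∧
        -- ... and structure of discontinuities
        (∀ t : ℝ, 0 < t → ¬ ContinuousAt g t →
          Z t = 0 ∧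
          ∀ Lm : ℝ, Tendsto g (𝓝[<] t) (𝓝 Lm) →
            (Tendsto g (𝓝[<] t) (𝓝 (g t)) ↔ 0 ≤ Lm)) ∧
        -- (3) under condition (1) of the boundary jitter property, the DP associated with `Z`
        -- for `ψ` has a unique solution `(φ,η)`, and `φ t = g (t+)`
        ((∀ t : ℝ, 0 ≤ t → Z t = 0 →
            ∀ s u : ℝ, s < t → t < u →
              ∃ a ∈ Ioo (max s 0) u, ∃ b ∈ Ioo (max s 0) u, Y a ≠ Y b) →
          ∃ φ η : ℝ → ℝ,
            SolvesDP1 Z ψ φ η ∧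
            (∀ φ' η' : ℝ → ℝ, SolvesDP1 Z ψ φ' η' →
              EqOn φ φ' (Ici 0) ∧ EqOn η η' (Ici 0)) ∧
            (∀ t : ℝ, 0 ≤ t → Tendsto g (𝓝[>] t) (𝓝 (φ t)))) := by
  intro ψ hψ
  obtain ⟨Xc, hXc, hXe⟩ := exists_continuous_eqOn_Ici hX
  obtain ⟨ψc, hψc, hψe⟩ := exists_continuous_eqOn_Ici hψ
  have hX0 : Xc 0 = X 0 := hXe (mem_Ici.2 le_rfl)
  have hψ0 : ψc 0 = ψ 0 := hψe (mem_Ici.2 le_rfl)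
  have hXe' : ∀ t, EqOn Xc X (Icc 0 t) := fun t => hXe.mono Icc_subset_Ici_self
  have hZe : EqOn (SM1 Xc) Z (Ici 0) := fun t ht => (SM1_congr ht (hXe' t)).trans (hZ t).symm
  refine ⟨derivSM1 Xc ψc, fun t ht => ?_, dlr1_derivSM1 hXc hψc,
    ⟨fun h => ?_, fun h => ?_⟩, fun t ht hd => ?_, fun hjit => ?_⟩
  · refine (tendsto_derivSM1 hXc hψc ht).congr fun ε => ?_
    rw [SM1_congr ht (hXe' t), SM1_congr (X' := fun s => X s + ε * ψ s) ht fun s hs => by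
      simp only [hXe' t hs, hψe (Icc_subset_Ici_self hs)]]
  · rw [derivSM1_zero_of_pos (hX0 ▸ h), hψ0]
  · rw [derivSM1_zero_of_eq_zero (hX0 ▸ h), hψ0]
  · rw [← hZe ht.le]
    exact SM1_eq_zero_and_tendsto_nhdsLT_iff hXc hψc ht hd
  · have hJ : JitterAtZeros Xc := fun t ht hZt s u hs hu => by
      obtain ⟨a, ha, b, hb, hne⟩ := hjit t ht (hZe ht ▸ hZt) s u hs hu
      refine ⟨a, ha, b, hb, ?_⟩
      rwa [hY, hY, ← runMax, ← runMax, ← runMax_congr (hXe' a), ← runMax_congr (hXe' b)] at hne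
    refine ⟨dpPhi Xc ψc, dpEta Xc ψc, (hJ.solvesDP1 hXc hψc).congr hZe hψe,
      fun φ' η' h' => ?_, fun t ht => hJ.tendsto_nhdsGT_dpPhi hXc hψc ht⟩
    exact SolvesDP1.eqOn (continuousOn_SM1 hXc) (fun t => SM1_nonneg hXc)
      (hJ.solvesDP1 hXc hψc) (h'.congr hZe.symm hψe.symm)

/-- **Proposition (directional derivatives of the one-dimensional Skorokhod map).**
For continuous `X` with `X 0 ≥ 0`, `Z = Γ₁(X)` and `Y(t) = max(sup_{[0,t]}(−X), 0)`:
(1) the directional derivative `g = ∇_ψ Γ₁(X)` exists for every continuous `ψ` and lies in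
`D_{ℓ,r}`; (2) `g 0 = ψ 0` if `X 0 > 0`, `g 0 = max (ψ 0) 0` if `X 0 = 0`, and at any
discontinuity point `t > 0` of `g` one has `Z t = 0` and `g` is left continuous at `t` iff
`g(t−) ≥ 0`; (3) if `(Z,Y)` satisfies condition (1) of the boundary jitter property, the
one-dimensional DP associated with `Z` for `ψ` has a unique solution `(φ,η)`, and
`φ t = g(t+)` for all `t ≥ 0`. -/
theorem statement19
    (X : ℝ → ℝ) (hX : ContinuousOn X (Ici 0)) (hX0 : 0 ≤ X 0)
    (Z Y : ℝ → ℝ)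
    (hZ : ∀ t : ℝ, Z t = SM1 X t)
    (hY : ∀ t : ℝ, Y t = max (sSup ((fun s => -X s) '' Icc 0 t)) 0) :
    ∀ ψ : ℝ → ℝ, ContinuousOn ψ (Ici 0) →
      ∃ g : ℝ → ℝ,
        -- (1) existence of the directional derivative ...
        (∀ t : ℝ, 0 ≤ t →
          Tendsto (fun ε : ℝ => (SM1 (fun s => X s + ε * ψ s) t - SM1 X t) / ε)
            (𝓝[>] (0:ℝ)) (𝓝 (g t))) ∧
        -- ... lying in `D_{ℓ,r}`
        Dlr1 g ∧
        -- (2) value at `0` ...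
        ((0 < X 0 → g 0 = ψ 0) ∧ (X 0 = 0 → g 0 = max (ψ 0) 0)) ∧
        -- ... and structure of discontinuities
        (∀ t : ℝ, 0 < t → ¬ ContinuousAt g t →
          Z t = 0 ∧
          ∀ Lm : ℝ, Tendsto g (𝓝[<] t) (𝓝 Lm) →
            (Tendsto g (𝓝[<] t) (𝓝 (g t)) ↔ 0 ≤ Lm)) ∧
        -- (3) under condition (1) of the boundary jitter property, the DP associated with `Z`
        -- for `ψ` has a unique solution `(φ,η)`, and `φ t = g (t+)`
        ((∀ t : ℝ, 0 ≤ t → Z t = 0 →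
            ∀ s u : ℝ, s < t → t < u →
              ∃ a ∈ Ioo (max s 0) u, ∃ b ∈ Ioo (max s 0) u, Y a ≠ Y b) →
          ∃ φ η : ℝ → ℝ,
            SolvesDP1 Z ψ φ η ∧
            (∀ φ' η' : ℝ → ℝ, SolvesDP1 Z ψ φ' η' →
              EqOn φ φ' (Ici 0) ∧ EqOn η η' (Ici 0)) ∧
            (∀ t : ℝ, 0 ≤ t → Tendsto g (𝓝[>] t) (𝓝 (φ t)))) :=
  statement19_general X hX Z Y hZ hY
end
end
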